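/- arXiv:2012.08936 — 2 statements merged into one kernel-verified Lean document; each statement's English description precedes it below -/
import Mathlib

section
/- Let T be a densely defined symmetric operator on L²(X,m) such that every element of ker T̄ is (a.e. equal to) a constant function. If T satisfies the L²-Liouville property (every f ∈ ker T* is constant), T is strictly positive, and m(X) = ∞, then T is essentially self-adjoint. -/
/-!
Write `S` for the closure of `T`. Strict positivity passes to `S` and gives `C ‖f‖ ≤ ‖S f‖`, so
the closed operator `S` has closed range. Since `μ X = ∞`, the only a.e. constant function in
`L²` is `0`, so the Liouville property says `ker T† = 0`; as `S† ≤ T†`, the range of `S` is also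
dense, hence all of `L²`. A symmetric operator onto the whole space is self-adjoint: if
`S† y = S f` then `S† (y - f) = 0`, and `ker S† = (range S)ᗮ = 0` forces `y = f`.
-/

open LinearPMap MeasureTheory InnerProductSpace RealInnerProductSpace
open scoped ENNReal

variable {X : Type*} [MeasurableSpace X]

def IsAEConstant {μ : Measure X} (f : Lp ℝ 2 μ) : Prop :=
  ∃ c : ℝ, ∀ᵐ x ∂μ, (f : X →ₘ[μ] ℝ) x = c

theorem IsAEConstant.eq_zero {μ : Measure X} {f : Lp ℝ 2 μ} (hf : IsAEConstant f)
    (hinf : μ Set.univ = ∞) : f = 0 := by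
  obtain ⟨c, hc⟩ := hf
  have hc0 : c = 0 := by
    have hmem : MemLp (fun _ : X => c) 2 μ := (Lp.memLp f).ae_eq hc
    simpa [hinf] using (memLp_const_iff two_ne_zero ENNReal.ofNat_ne_top).mp hmem
  subst hc0
  exact Lp.eq_zero_iff_ae_eq_zero.mpr hc

theorem mul_norm_le_norm_of_mul_norm_sq_le_inner {E : Type*} [NormedAddCommGroup E]
    [InnerProductSpace ℝ E] {u v : E} {C : ℝ} (h : C * ‖v‖ ^ 2 ≤ ⟪u, v⟫) : C * ‖v‖ ≤ ‖u‖ := by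
  rcases (norm_nonneg v).eq_or_lt with hv | hv
  · rw [← hv, mul_zero]
    exact norm_nonneg u
  · refine le_of_mul_le_mul_right ?_ hv
    calc C * ‖v‖ * ‖v‖ = C * ‖v‖ ^ 2 := by ring
      _ ≤ ⟪u, v⟫ := h
      _ ≤ ‖u‖ * ‖v‖ := real_inner_le_norm u v

namespace LinearPMap

section Closure

variable {R E F : Type*} [CommRing R] [AddCommGroup E] [AddCommGroup F] [Module R E] [Module R F]
  [TopologicalSpace E] [TopologicalSpace F] [ContinuousAdd E] [ContinuousAdd F]
  [TopologicalSpace R] [ContinuousSMul R E] [ContinuousSMul R F]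

theorem IsClosable.closure_apply_mem_of_isClosed {T : E →ₗ.[R] F} (hT : T.IsClosable)
    {s : Set (E × F)} (hs : _root_.IsClosed s) (hTs : ∀ x : T.domain, ((x : E), T x) ∈ s)
    (x : T.closure.domain) : ((x : E), T.closure x) ∈ s := by
  have hgraph : (T.graph : Set (E × F)) ⊆ s := by
    rintro ⟨a, b⟩ hp
    obtain ⟨x, rfl : (x : E) = a, rfl : T x = b⟩ := T.mem_graph_iff.mp hp
    exact hTs x
  have hx := T.closure.mem_graph x
  rw [← hT.graph_closure_eq_closure_graph] at hx
  exact closure_minimal hgraph hs (by rwa [← Submodule.topologicalClosure_coe])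

end Closure

theorem IsClosed.isClosed_range_of_mul_norm_le {𝕜 E F : Type*} [NontriviallyNormedField 𝕜]
    [NormedAddCommGroup E] [NormedSpace 𝕜 E] [CompleteSpace E]
    [NormedAddCommGroup F] [NormedSpace 𝕜 F] [CompleteSpace F]
    {T : E →ₗ.[𝕜] F} (hT : T.IsClosed) {C : ℝ} (hC : 0 < C)
    (hbound : ∀ x : T.domain, C * ‖(x : E)‖ ≤ ‖T x‖) : _root_.IsClosed (Set.range T) := by
  have : CompleteSpace T.graph := hT.completeSpace_coe
  let g : T.graph →L[𝕜] F := (ContinuousLinearMap.snd 𝕜 E F).comp T.graph.subtypeL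
  have hg : AntilipschitzWith (max 1 C⁻¹).toNNReal g := by
    refine g.antilipschitz_of_bound fun p => ?_
    obtain ⟨x, hx1, hx2⟩ := T.mem_graph_iff.mp p.2
    have h1 : ‖(x : E)‖ ≤ C⁻¹ * ‖T x‖ := (le_inv_mul_iff₀ hC).mpr (hbound x)
    have hgp : g p = T x := hx2.symm
    rw [Submodule.coe_norm, Prod.norm_def, ← hx1, ← hx2, hgp,
      Real.coe_toNNReal _ (by positivity)]
    refine max_le ?_ ?_
    · exact h1.trans (mul_le_mul_of_nonneg_right (le_max_right _ _) (norm_nonneg _))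
    · exact le_mul_of_one_le_left (norm_nonneg _) (le_max_left _ _)
  have hrange : Set.range g = Set.range T := by
    ext y
    rw [mem_range_iff]
    exact ⟨fun ⟨p, hp⟩ => ⟨p.1.1, hp ▸ p.2⟩, fun ⟨x, hx⟩ => ⟨⟨(x, y), hx⟩, rfl⟩⟩
  exact hrange ▸ hg.isClosed_range g.uniformContinuous

section InnerProduct

variable {𝕜 E F : Type*} [RCLike 𝕜] [NormedAddCommGroup E] [InnerProductSpace 𝕜 E]
  [NormedAddCommGroup F] [InnerProductSpace 𝕜 F]

theorem IsFormalAdjoint.closure_right {S : F →ₗ.[𝕜] E} {T : E →ₗ.[𝕜] F}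
    (h : S.IsFormalAdjoint T) (hT : T.IsClosable) : S.IsFormalAdjoint T.closure := fun x =>
  hT.closure_apply_mem_of_isClosed (s := {p | ⟪S x, p.1⟫_𝕜 = ⟪(x : F), p.2⟫_𝕜})
    (isClosed_eq (continuous_const.inner continuous_fst) (continuous_const.inner continuous_snd))
    (h x)

theorem IsFormalAdjoint.closure {T : E →ₗ.[𝕜] E} (h : T.IsFormalAdjoint T) (hT : T.IsClosable) :
    T.closure.IsFormalAdjoint T.closure :=
  (h.closure_right hT).symm.closure_right hT

variable [CompleteSpace E]

theorem IsFormalAdjoint.isClosable {T : E →ₗ.[𝕜] E} (hT : Dense (T.domain : Set E))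
    (h : T.IsFormalAdjoint T) : T.IsClosable :=
  isClosable_iff_exists_closed_extension.mpr ⟨T†, adjoint_isClosed hT, h.le_adjoint hT⟩

theorem adjoint_le_adjoint {T S : E →ₗ.[𝕜] F} (hT : Dense (T.domain : Set E)) (hTS : T ≤ S) :
    S† ≤ T† := by
  have hS : Dense (S.domain : Set E) := hT.mono hTS.1
  refine IsFormalAdjoint.le_adjoint hT fun x y => ?_
  obtain ⟨x', hx'⟩ := exists_of_le hTS x
  rw [hx'.2, hx'.1]
  exact (adjoint_isFormalAdjoint hS).symm x' y

theorem range_eq_top_of_isClosed_of_ker_adjoint [CompleteSpace F] {T : E →ₗ.[𝕜] F}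
    (hT : Dense (T.domain : Set E)) (hclosed : _root_.IsClosed (Set.range T))
    (hker : ∀ y : T†.domain, T† y = 0 → (y : F) = 0) : LinearMap.range T.toFun = ⊤ := by
  have : CompleteSpace (LinearMap.range T.toFun) := hclosed.completeSpace_coe
  rw [← Submodule.orthogonal_eq_bot_iff, Submodule.eq_bot_iff]
  intro y hy
  have hy' : ∀ x : T.domain, ⟪(0 : E), (x : E)⟫_𝕜 = ⟪y, T x⟫_𝕜 := fun x =>
    (inner_zero_left _).trans
      (Submodule.inner_left_of_mem_orthogonal (LinearMap.mem_range_self _ x) hy).symm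
  have hmem : y ∈ T†.domain := mem_adjoint_domain_of_exists y ⟨0, hy'⟩
  exact hker ⟨y, hmem⟩ (adjoint_apply_eq hT _ hy')

theorem isSelfAdjoint_of_range_eq_top {T : E →ₗ.[𝕜] E} (hT : Dense (T.domain : Set E))
    (hsymm : T.IsFormalAdjoint T) (hrange : LinearMap.range T.toFun = ⊤) : IsSelfAdjoint T := by
  have hle : T ≤ T† := hsymm.le_adjoint hT
  have hker : ∀ z : T†.domain, T† z = 0 → (z : E) = 0 := fun z hz => by
    refine ext_inner_right 𝕜 fun w => ?_
    obtain ⟨x, rfl⟩ : w ∈ LinearMap.range T.toFun := hrange ▸ Submodule.mem_top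
    rw [inner_zero_left, toFun_eq_coe, ← adjoint_isFormalAdjoint hT z x, hz, inner_zero_left]
  refine le_antisymm (le_of_le_graph ?_) hle
  rintro ⟨a, b⟩ hp
  obtain ⟨y, rfl : (y : E) = a, rfl : T† y = b⟩ := T†.mem_graph_iff.mp hp
  obtain ⟨f, hf⟩ : T† y ∈ LinearMap.range T.toFun := hrange ▸ Submodule.mem_top
  obtain ⟨f', hff'⟩ := exists_of_le hle f
  have hyf : (y : E) = f := by
    rw [← sub_eq_zero, hff'.1]
    exact hker (y - f') (by rw [map_sub, ← hff'.2, ← hf, toFun_eq_coe, sub_self])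
  rw [hyf, ← hf]
  exact T.mem_graph f

end InnerProduct

section Real

variable {E : Type*} [NormedAddCommGroup E] [InnerProductSpace ℝ E]

theorem IsClosable.mul_norm_sq_le_inner_closure {T : E →ₗ.[ℝ] E} (hT : T.IsClosable) {C : ℝ}
    (h : ∀ x : T.domain, C * ‖(x : E)‖ ^ 2 ≤ ⟪T x, (x : E)⟫) (x : T.closure.domain) :
    C * ‖(x : E)‖ ^ 2 ≤ ⟪T.closure x, (x : E)⟫ :=
  hT.closure_apply_mem_of_isClosed (s := {p | C * ‖p.1‖ ^ 2 ≤ ⟪p.2, p.1⟫})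
    (isClosed_le (by fun_prop) (continuous_snd.inner continuous_fst)) h x

end Real

end LinearPMap

theorem essentially_selfAdjoint_of_L2_Liouville_general
    (μ : Measure X)
    (T : Lp ℝ 2 μ →ₗ.[ℝ] Lp ℝ 2 μ)
    (hdense : Dense (T.domain : Set (Lp ℝ 2 μ)))
    (hsymm : ∀ x y : T.domain, ⟪T x, (y : Lp ℝ 2 μ)⟫ = ⟪(x : Lp ℝ 2 μ), T y⟫)
    (hLiouville : ∀ f : T.adjoint.domain, T.adjoint f = 0 → IsAEConstant (f : Lp ℝ 2 μ))
    (hpos : ∃ C : ℝ, 0 < C ∧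
      ∀ f : T.domain, C * ‖(f : Lp ℝ 2 μ)‖ ^ 2 ≤ ⟪T f, (f : Lp ℝ 2 μ)⟫)
    (hinf : μ Set.univ = ∞) :
    IsSelfAdjoint T.closure := by
  obtain ⟨C, hC, hcoercive⟩ := hpos
  have hsymm : T.IsFormalAdjoint T := hsymm
  have hT : T.IsClosable := hsymm.isClosable hdense
  have hdense' : Dense (T.closure.domain : Set (Lp ℝ 2 μ)) :=
    hdense.mono fun _ hx => T.le_closure.1 hx
  refine isSelfAdjoint_of_range_eq_top hdense' (hsymm.closure hT)
    (range_eq_top_of_isClosed_of_ker_adjoint hdense' ?_ ?_)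
  · exact hT.closure_isClosed.isClosed_range_of_mul_norm_le hC fun f =>
      mul_norm_le_norm_of_mul_norm_sq_le_inner (hT.mul_norm_sq_le_inner_closure hcoercive f)
  · intro y hy
    obtain ⟨y', hyy'⟩ := exists_of_le (adjoint_le_adjoint hdense T.le_closure) y
    rw [hyy'.1]
    exact (hLiouville y' (hyy'.2 ▸ hy)).eq_zero hinf

/-- Let `T` be a densely defined symmetric operator on `L²(X, μ)` such that
every element of the kernel of its closure is a.e. constant.  If `T` satisfies the
`L²`-Liouville property (every element of `ker T†` is a.e. constant), `T` is strictly
positive and `μ(X) = ∞`, then `T` is essentially self-adjoint. -/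
theorem essentially_selfAdjoint_of_L2_Liouville
    (μ : Measure X)
    (T : Lp ℝ 2 μ →ₗ.[ℝ] Lp ℝ 2 μ)
    (hdense : Dense (T.domain : Set (Lp ℝ 2 μ)))
    (hsymm : ∀ x y : T.domain, ⟪T x, (y : Lp ℝ 2 μ)⟫ = ⟪(x : Lp ℝ 2 μ), T y⟫)
    (hclos : ∀ f : T.closure.domain, T.closure f = 0 → IsAEConstant (f : Lp ℝ 2 μ))
    (hLiouville : ∀ f : T.adjoint.domain, T.adjoint f = 0 → IsAEConstant (f : Lp ℝ 2 μ))
    (hpos : ∃ C : ℝ, 0 < C ∧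
      ∀ f : T.domain, C * ‖(f : Lp ℝ 2 μ)‖ ^ 2 ≤ ⟪T f, (f : Lp ℝ 2 μ)⟫)
    (hinf : μ Set.univ = ∞) :
    IsSelfAdjoint T.closure :=
  essentially_selfAdjoint_of_L2_Liouville_general μ T hdense hsymm hLiouville hpos hinf
end

section
/- Let b be the graph on ℕ with edges between consecutive integers, edge weights b(n, n+1) > 0 and measure m. Suppose f : ℕ → ℝ is nonconstant and satisfies Lf(n) = λ f(n) for all n ≥ 1 with λ < 0 (λ-harmonic). If Σ_n 1/b(n,n+1) = ∞ and f is not identically 0, then f is unbounded. -/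
/-!
Write `F n := b(n, n+1) (f(n+1) - f(n))` for the flux of `f` through the edge `{n, n+1}`. On the
half-line, `m(n) (L f)(n)` is the net outflow `F(n-1) - F(n)` (with `F(-1) = 0`), so the equation
`L f = λ f` integrates to `F(n) = -λ Σ_{k ≤ n} m(k) f(k)`. Hence `f(0) = 0` forces `f = 0`, and after
a change of sign `f(0) > 0`; then inductively `f` stays positive, so `F(n) ≥ -λ m(0) f(0) > 0` and
`f(n) ≥ f(0) - λ m(0) f(0) Σ_{k < n} 1 / b(k, k+1)`, which tends to infinity.
-/

open Filter Finset

theorem tendsto_atTop_of_mul_le_sub {u a : ℕ → ℝ} {c : ℝ} (hc : 0 < c) (ha : ∀ n, 0 ≤ a n)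
    (hsum : ¬ Summable a) (hu : ∀ n, c * a n ≤ u (n + 1) - u n) : Tendsto u atTop atTop := by
  have hpartial : Tendsto (fun n => ∑ k ∈ range n, a k) atTop atTop :=
    (not_summable_iff_tendsto_nat_atTop_of_nonneg ha).1 hsum
  refine tendsto_atTop_mono (fun n => ?_)
    (tendsto_atTop_add_const_left _ (u 0) (hpartial.const_mul_atTop hc))
  calc u 0 + c * ∑ k ∈ range n, a k
      ≤ u 0 + ∑ k ∈ range n, (u (k + 1) - u k) := by
        rw [mul_sum]; gcongr with k; exact hu k
    _ = u n := by rw [sum_range_sub]; ring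

section PathGraph

variable {b : ℕ → ℕ → ℝ} {m : ℕ → ℝ} {lam : ℝ} {f : ℕ → ℝ}

def flux (b : ℕ → ℕ → ℝ) (f : ℕ → ℝ) (n : ℕ) : ℝ := b n (n + 1) * (f (n + 1) - f n)

theorem flux_neg (n : ℕ) : flux b (-f) n = -flux b f n := by
  simp only [flux, Pi.neg_apply]; ring

theorem tsum_mul_sub_zero_eq_neg_flux (hb : ∀ y, y ≠ 1 → b 0 y = 0) :
    ∑' y, b 0 y * (f 0 - f y) = -flux b f 0 := by
  rw [tsum_eq_single 1 fun y hy => by rw [hb y hy, zero_mul], flux]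
  ring

theorem tsum_mul_sub_succ_eq_flux_sub (n : ℕ) (hb : ∀ y, y ≠ n → y ≠ n + 2 → b (n + 1) y = 0)
    (hsymm : b (n + 1) n = b n (n + 1)) :
    ∑' y, b (n + 1) y * (f (n + 1) - f y) = flux b f n - flux b f (n + 1) := by
  rw [tsum_eq_sum (s := {n, n + 2}) fun y hy => by
      simp only [mem_insert, mem_singleton, not_or] at hy
      rw [hb y hy.1 hy.2, zero_mul],
    sum_pair (by omega), flux, flux, hsymm]
  ring

theorem flux_eq_neg_mul_sum (hb : ∀ x y, y ≠ x + 1 → x ≠ y + 1 → b x y = 0)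
    (hsymm : ∀ x y, b x y = b y x) (hf : ∀ n, ∑' y, b n y * (f n - f y) = lam * m n * f n)
    (n : ℕ) : flux b f n = -lam * ∑ k ∈ range (n + 1), m k * f k := by
  induction n with
  | zero =>
    have h0 := hf 0
    rw [tsum_mul_sub_zero_eq_neg_flux fun y hy => hb 0 y hy (by omega)] at h0
    rw [sum_range_one]; linarith
  | succ n ih =>
    have hn := hf (n + 1)
    rw [tsum_mul_sub_succ_eq_flux_sub n (fun y hy hy' => hb (n + 1) y (by omega) (by omega))
      (hsymm _ _)] at hn
    rw [sum_range_succ]; linear_combination ih - hn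

variable (hb : ∀ n, 0 < b n (n + 1))
  (hflux : ∀ n, flux b f n = -lam * ∑ k ∈ range (n + 1), m k * f k)
include hb hflux

theorem eq_zero_of_flux_eq_of_apply_zero (hf0 : f 0 = 0) (n : ℕ) : f n = 0 := by
  induction n using Nat.strong_induction_on with
  | _ n ih =>
    rcases n with _ | k
    · exact hf0
    · have hfk : flux b f k = 0 := by
        rw [hflux, sum_eq_zero fun j hj => by rw [ih j (mem_range.1 hj), mul_zero], mul_zero]
      rw [flux, mul_eq_zero, sub_eq_zero] at hfk
      rw [hfk.resolve_left (hb k).ne', ih k (by omega)]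

variable (hlam : lam < 0) (hm : ∀ n, 0 < m n)
include hlam hm

theorem pos_of_flux_eq (hf0 : 0 < f 0) (n : ℕ) : 0 < f n := by
  induction n using Nat.strong_induction_on with
  | _ n ih =>
    rcases n with _ | k
    · exact hf0
    · have hfk : 0 < flux b f k := by
        rw [hflux]
        exact mul_pos (neg_pos.2 hlam)
          (sum_pos (fun j hj => mul_pos (hm j) (ih j (mem_range.1 hj))) nonempty_range_add_one)
      have hk := ih k (by omega)
      rw [flux] at hfk
      nlinarith [pos_of_mul_pos_right hfk (hb k).le]

theorem flux_zero_le_flux (hf0 : 0 < f 0) (n : ℕ) : flux b f 0 ≤ flux b f n := by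
  rw [hflux, hflux, sum_range_one]
  exact mul_le_mul_of_nonneg_left
    (single_le_sum (fun k _ => (mul_pos (hm k) (pos_of_flux_eq hb hflux hlam hm hf0 k)).le)
      (by simp))
    (neg_nonneg.2 hlam.le)

theorem tendsto_atTop_of_flux_eq (hrecip : ¬ Summable fun n => 1 / b n (n + 1)) (hf0 : 0 < f 0) :
    Tendsto f atTop atTop := by
  have hflux0 : 0 < flux b f 0 := by
    rw [hflux, sum_range_one]; exact mul_pos (neg_pos.2 hlam) (mul_pos (hm 0) hf0)
  refine tendsto_atTop_of_mul_le_sub hflux0 (fun n => (one_div_pos.2 (hb n)).le) hrecip fun n => ?_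
  rw [← div_eq_mul_one_div, div_le_iff₀ (hb n)]
  calc flux b f 0 ≤ flux b f n := flux_zero_le_flux hb hflux hlam hm hf0 n
    _ = _ := by rw [flux, mul_comm]

end PathGraph

theorem lambda_harmonic_unbounded_of_reciprocal_weights_not_summable_general
    (b : ℕ → ℕ → ℝ) (m : ℕ → ℝ) (lam : ℝ) (f : ℕ → ℝ)
    (hb_nonneg : ∀ x y, 0 ≤ b x y)
    (hb_symm : ∀ x y, b x y = b y x)
    (hb_adj : ∀ x y, 0 < b x y ↔ (y = x + 1 ∨ x = y + 1))
    (hm_pos : ∀ x, 0 < m x)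
    (hlam : lam < 0)
    -- `f` is `λ`-harmonic: `L f = λ f`
    (hf : ∀ n, (1 / m n) * ∑' y, b n y * (f n - f y) = lam * f n)
    -- reciprocal edge weights are not summable
    (hrecip : ¬ Summable fun n => 1 / b n (n + 1))
    -- `f` is nonconstant and not identically zero
    (hnontriv : ∃ n, f n ≠ 0) :
    ¬ BddAbove (Set.range fun n => |f n|) := by
  have hb : ∀ n, 0 < b n (n + 1) := fun n => (hb_adj n (n + 1)).2 (Or.inl rfl)
  have hb_zero : ∀ x y, y ≠ x + 1 → x ≠ y + 1 → b x y = 0 := fun x y hxy hyx =>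
    le_antisymm (not_lt.1 fun h => ((hb_adj x y).1 h).elim hxy hyx) (hb_nonneg x y)
  have hf' : ∀ n, ∑' y, b n y * (f n - f y) = lam * m n * f n := fun n => by
    have h := hf n
    rw [one_div, inv_mul_eq_div, div_eq_iff (hm_pos n).ne'] at h
    rw [h]; ring
  have hflux := flux_eq_neg_mul_sum hb_zero hb_symm hf'
  have hf0 : f 0 ≠ 0 := fun h0 => by
    obtain ⟨n, hn⟩ := hnontriv
    exact hn (eq_zero_of_flux_eq_of_apply_zero hb hflux h0 n)
  refine not_bddAbove_of_tendsto_atTop (l := atTop) ?_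
  rcases hf0.lt_or_gt with hneg | hpos
  · have hflux_neg : ∀ n, flux b (-f) n = -lam * ∑ k ∈ range (n + 1), m k * (-f) k := fun n => by
      simp only [flux_neg, hflux, Pi.neg_apply, mul_neg, sum_neg_distrib]
    exact tendsto_atTop_mono (fun n => neg_le_abs (f n))
      (tendsto_atTop_of_flux_eq hb hflux_neg hlam hm_pos hrecip (neg_pos.2 hneg))
  · exact tendsto_atTop_mono (fun n => le_abs_self (f n))
      (tendsto_atTop_of_flux_eq hb hflux hlam hm_pos hrecip hpos)

/-- On the half-line graph (vertices `ℕ`, edges between consecutive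
integers), let `f` be a nonconstant, nontrivial `λ`-harmonic function with `λ < 0`.
If `Σₙ 1/b(n, n+1) = ∞`, then `f` is unbounded. -/
theorem lambda_harmonic_unbounded_of_reciprocal_weights_not_summable
    (b : ℕ → ℕ → ℝ) (m : ℕ → ℝ) (lam : ℝ) (f : ℕ → ℝ)
    (hb_nonneg : ∀ x y, 0 ≤ b x y)
    (hb_symm : ∀ x y, b x y = b y x)
    (hb_adj : ∀ x y, 0 < b x y ↔ (y = x + 1 ∨ x = y + 1))
    (hm_pos : ∀ x, 0 < m x)
    (hlam : lam < 0)
    -- `f` is `λ`-harmonic: `L f = λ f`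
    (hf : ∀ n, (1 / m n) * ∑' y, b n y * (f n - f y) = lam * f n)
    -- reciprocal edge weights are not summable
    (hrecip : ¬ Summable fun n => 1 / b n (n + 1))
    -- `f` is nonconstant and not identically zero
    (hnonconst : ¬ ∀ n k, f n = f k)
    (hnontriv : ∃ n, f n ≠ 0) :
    ¬ BddAbove (Set.range fun n => |f n|) :=
  lambda_harmonic_unbounded_of_reciprocal_weights_not_summable_general b m lam f hb_nonneg hb_symm
    hb_adj hm_pos hlam hf hrecip hnontriv
end
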